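/- Let h : ℂ → ℂ be an entire function and define smooth functions p, y : ℝ² → ℝ by p(u,v) = Re h(u + i v) and y(u,v) = Im h(u + i v). Then there exists a smooth function z : ℝ² → ℝ with z_u = p + v·y_u and z_v = v·y_v on ℝ², and for any such z the map f(u,v) = (u, y(u,v), z(u,v), p(u,v), v) satisfies the contact condition and the Hess = 1 condition on all of ℝ². -/

import Mathlib

noncomputable section

open Complex MeasureTheory

namespace Stmt4Aux

/-- The inclusion `ℝ² → ℂ`, `(u,v) ↦ u + v i`, as a continuous linear map. -/
def cw : ℝ × ℝ →L[ℝ] ℂ :=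
  Complex.ofRealCLM.comp (ContinuousLinearMap.fst ℝ ℝ ℝ) +
    (ContinuousLinearMap.snd ℝ ℝ ℝ).smulRight Complex.I

lemma cw_apply (a : ℝ × ℝ) : cw a = a.1 + a.2 * Complex.I := by
  simp [cw, Complex.real_smul]

/-- The real Fréchet derivative of `a ↦ h (a.1 + a.2 i)`. -/
def Dm (h : ℂ → ℂ) (a : ℝ × ℝ) : ℝ × ℝ →L[ℝ] ℂ :=
  (((1 : ℂ →L[ℂ] ℂ).smulRight (deriv h (cw a))).restrictScalars ℝ).comp cw

lemma Dm_apply (h : ℂ → ℂ) (a x : ℝ × ℝ) :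
    Dm h a x = (x.1 + x.2 * Complex.I) * deriv h (cw a) := by
  simp [Dm, cw_apply, smul_eq_mul, mul_comm]

lemma keyFDeriv {h : ℂ → ℂ} (hh : Differentiable ℂ h) (a : ℝ × ℝ) :
    HasFDerivAt (fun a : ℝ × ℝ => h (cw a)) (Dm h a) a :=
  ((((hh (cw a)).hasDerivAt).hasFDerivAt.restrictScalars ℝ)).comp a cw.hasFDerivAt

/-- Joint differentiability of a parametric integral with moving endpoint, at the
point where the moving endpoint equals the basepoint. -/
lemma hasFDerivAt_param_integral {f : ℝ × ℝ → ℝ} (hf : Continuous f) (a₀ : ℝ × ℝ) :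
    HasFDerivAt (fun a : ℝ × ℝ => ∫ t in a₀.1..a.1, f (t, a.2))
      (f a₀ • ContinuousLinearMap.fst ℝ ℝ ℝ) a₀ := by
  rw [hasFDerivAt_iff_isLittleO_nhds_zero, Asymptotics.isLittleO_iff]
  intro ε hε
  obtain ⟨δ, hδ, hball⟩ := Metric.continuousAt_iff.mp hf.continuousAt ε hε
  filter_upwards [Metric.ball_mem_nhds (0 : ℝ × ℝ) hδ] with k hk
  have hk' : ‖k‖ < δ := by simpa using hk
  have hint : IntervalIntegrable (fun t => f (t, a₀.2 + k.2)) volume a₀.1 (a₀.1 + k.1) :=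
    (hf.comp (continuous_id.prodMk continuous_const)).intervalIntegrable _ _
  have e3 : (f a₀ • ContinuousLinearMap.fst ℝ ℝ ℝ) k = f a₀ * k.1 := by
    simp only [ContinuousLinearMap.smul_apply, ContinuousLinearMap.coe_fst', smul_eq_mul]
  simp only [Prod.fst_add, Prod.snd_add, intervalIntegral.integral_same, sub_zero, e3]
  have e4 : (∫ t in a₀.1..(a₀.1 + k.1), f (t, a₀.2 + k.2)) - f a₀ * k.1
      = ∫ t in a₀.1..(a₀.1 + k.1), (f (t, a₀.2 + k.2) - f a₀) := by
    rw [intervalIntegral.integral_sub hint (intervalIntegrable_const),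
      intervalIntegral.integral_const]
    simp only [smul_eq_mul]
    ring
  rw [e4]
  have hbd : ∀ t ∈ Set.uIoc a₀.1 (a₀.1 + k.1), ‖f (t, a₀.2 + k.2) - f a₀‖ ≤ ε := by
    intro t ht
    have h1 : |t - a₀.1| ≤ |k.1| := by
      rcases Set.mem_uIoc.mp ht with ⟨h1, h2⟩ | ⟨h1, h2⟩ <;>
      · rw [abs_le]
        constructor <;> nlinarith [le_abs_self k.1, neg_abs_le k.1]
    have hdist : dist (t, a₀.2 + k.2) a₀ < δ := by
      rw [Prod.dist_eq]
      apply max_lt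
      · calc dist t a₀.1 = |t - a₀.1| := by rw [Real.dist_eq]
          _ ≤ |k.1| := h1
          _ ≤ ‖k‖ := norm_fst_le k
          _ < δ := hk'
      · calc dist (a₀.2 + k.2) a₀.2 = |k.2| := by rw [Real.dist_eq]; ring_nf
          _ ≤ ‖k‖ := norm_snd_le k
          _ < δ := hk'
    exact le_of_lt (hball hdist)
  calc ‖∫ t in a₀.1..(a₀.1 + k.1), (f (t, a₀.2 + k.2) - f a₀)‖
      ≤ ε * |(a₀.1 + k.1) - a₀.1| := intervalIntegral.norm_integral_le_of_norm_le_const hbd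
    _ = ε * |k.1| := by ring_nf
    _ ≤ ε * ‖k‖ := by
        have := norm_fst_le k
        have : |k.1| ≤ ‖k‖ := this
        nlinarith
end Stmt4Aux

/-- Partial derivative in the direction `(1,0)`. -/
def pu (g : ℝ × ℝ → ℝ) (a : ℝ × ℝ) : ℝ := fderiv ℝ g a (1, 0)

/-- Partial derivative in the direction `(0,1)`. -/
def pv (g : ℝ × ℝ → ℝ) (a : ℝ × ℝ) : ℝ := fderiv ℝ g a (0, 1)

/-- Jacobian determinant `g_u h_v - g_v h_u`. -/
def Jac (g h : ℝ × ℝ → ℝ) (a : ℝ × ℝ) : ℝ := pu g a * pv h a - pv g a * pu h a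

/-- The first coordinate function `x(u,v) = u`. -/
def Xc : ℝ × ℝ → ℝ := fun a => a.1

/-- The last coordinate function `q(u,v) = v`. -/
def Qc : ℝ × ℝ → ℝ := fun a => a.2

/-- From an entire function `h`, setting `p = Re h`, `y = Im h`, there is a smooth
primitive `z`, and for any such `z` the map `(u, y, z, p, v)` is a geometric solution
to Hess = 1 on all of `ℝ²`. -/
theorem stmt4 (h : ℂ → ℂ) (hh : Differentiable ℂ h)
    (p y : ℝ × ℝ → ℝ)
    (hpdef : ∀ a : ℝ × ℝ, p a = (h (a.1 + a.2 * Complex.I)).re)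
    (hydef : ∀ a : ℝ × ℝ, y a = (h (a.1 + a.2 * Complex.I)).im) :
    (∃ z : ℝ × ℝ → ℝ, ContDiff ℝ (⊤ : ℕ∞) z ∧
      ∀ a : ℝ × ℝ, pu z a = p a + a.2 * pu y a ∧ pv z a = a.2 * pv y a) ∧
    ∀ z : ℝ × ℝ → ℝ,
      (∀ a : ℝ × ℝ, pu z a = p a + a.2 * pu y a ∧ pv z a = a.2 * pv y a) →
      (∀ a : ℝ × ℝ,
        (pu z a = p a * pu Xc a + Qc a * pu y a ∧
         pv z a = p a * pv Xc a + Qc a * pv y a) ∧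
        Jac Xc y a = Jac p Qc a) := by
  classical
  set c : ℝ × ℝ → ℂ := fun a => deriv h (Stmt4Aux.cw a) with hc
  have hpfun : p = fun a : ℝ × ℝ => (h (Stmt4Aux.cw a)).re :=
    funext fun a => by rw [hpdef a, Stmt4Aux.cw_apply]
  have hyfun : y = fun a : ℝ × ℝ => (h (Stmt4Aux.cw a)).im :=
    funext fun a => by rw [hydef a, Stmt4Aux.cw_apply]
  have hD : ∀ a, HasFDerivAt (fun a : ℝ × ℝ => h (Stmt4Aux.cw a)) (Stmt4Aux.Dm h a) a :=
    Stmt4Aux.keyFDeriv hh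
  have hp' : ∀ a, HasFDerivAt p (Complex.reCLM.comp (Stmt4Aux.Dm h a)) a := by
    intro a; rw [hpfun]
    exact (Complex.reCLM.hasFDerivAt).comp a (hD a)
  have hy' : ∀ a, HasFDerivAt y (Complex.imCLM.comp (Stmt4Aux.Dm h a)) a := by
    intro a; rw [hyfun]
    exact (Complex.imCLM.hasFDerivAt).comp a (hD a)
  have hDm1 : ∀ a : ℝ × ℝ, Stmt4Aux.Dm h a (1, 0) = c a := by
    intro a; rw [Stmt4Aux.Dm_apply]; simp [hc]
  have hDm2 : ∀ a : ℝ × ℝ, Stmt4Aux.Dm h a (0, 1) = Complex.I * c a := by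
    intro a; rw [Stmt4Aux.Dm_apply]; simp [hc]
  have hpu_p : ∀ a, pu p a = (c a).re := by
    intro a
    simp only [pu, (hp' a).fderiv, ContinuousLinearMap.comp_apply, hDm1 a, Complex.reCLM_apply]
  have hpv_p : ∀ a, pv p a = -(c a).im := by
    intro a
    simp only [pv, (hp' a).fderiv, ContinuousLinearMap.comp_apply, hDm2 a, Complex.reCLM_apply]
    simp [Complex.mul_re]
  have hpu_y : ∀ a, pu y a = (c a).im := by
    intro a
    simp only [pu, (hy' a).fderiv, ContinuousLinearMap.comp_apply, hDm1 a, Complex.imCLM_apply]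
  have hpv_y : ∀ a, pv y a = (c a).re := by
    intro a
    simp only [pv, (hy' a).fderiv, ContinuousLinearMap.comp_apply, hDm2 a, Complex.imCLM_apply]
    simp [Complex.mul_im]
  -- continuity and smoothness facts
  have hch : ContDiff ℂ (⊤ : ℕ∞) h :=
    contDiff_iff_contDiffAt.mpr fun x => (hh.analyticAt x).contDiffAt
  have hcd : ContDiff ℂ (⊤ : ℕ∞) (deriv h) := (contDiff_infty_iff_deriv.mp hch).2
  have hchR : ContDiff ℝ (⊤ : ℕ∞) h :=
    contDiff_iff_contDiffAt.mpr fun x => (hch.contDiffAt).restrict_scalars ℝ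
  have hcdR : ContDiff ℝ (⊤ : ℕ∞) (deriv h) :=
    contDiff_iff_contDiffAt.mpr fun x => (hcd.contDiffAt).restrict_scalars ℝ
  have hccont : Continuous c := hcd.continuous.comp Stmt4Aux.cw.continuous
  have hpcont : Continuous p := by
    rw [hpfun]; exact Complex.continuous_re.comp (hh.continuous.comp Stmt4Aux.cw.continuous)
  have hycont : Continuous y := by
    rw [hyfun]; exact Complex.continuous_im.comp (hh.continuous.comp Stmt4Aux.cw.continuous)
  constructor
  · -- existence of z
    set z : ℝ × ℝ → ℝ := fun a =>
      (∫ t in (0:ℝ)..a.1, p (t, a.2)) - (∫ s in (0:ℝ)..a.2, y (0, s)) + a.2 * y a with hzdef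
    set Zc : ℝ × ℝ → (ℝ × ℝ →L[ℝ] ℝ) := fun a =>
      (p a + a.2 * (c a).im) • ContinuousLinearMap.fst ℝ ℝ ℝ +
        (a.2 * (c a).re) • ContinuousLinearMap.snd ℝ ℝ ℝ with hZcdef
    have hz' : ∀ a₀ : ℝ × ℝ, HasFDerivAt z (Zc a₀) a₀ := by
      intro a₀
      -- split the first integral at a₀.1
      have hintp : ∀ (u u' v : ℝ), IntervalIntegrable (fun t => p (t, v)) volume u u' := by
        intro u u' v
        exact (hpcont.comp (continuous_id.prodMk continuous_const)).intervalIntegrable _ _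
      have hsplit : z = fun a : ℝ × ℝ =>
          (((∫ t in (0:ℝ)..a₀.1, p (t, a.2)) + ∫ t in a₀.1..a.1, p (t, a.2))
            - (∫ s in (0:ℝ)..a.2, y (0, s))) + a.2 * y a := by
        funext a
        rw [hzdef]
        rw [intervalIntegral.integral_add_adjacent_intervals (hintp _ _ _) (hintp _ _ _)]
      -- derivative of the fixed-endpoint parametric integral
      have hA1 : HasDerivAt (fun v => ∫ t in (0:ℝ)..a₀.1, p (t, v))
          (∫ t in (0:ℝ)..a₀.1, -(c (t, a₀.2)).im) a₀.2 := by
        obtain ⟨C, hC⟩ :=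
          ((isCompact_uIcc (a := (0:ℝ)) (b := a₀.1)).prod
            (isCompact_closedBall a₀.2 1)).exists_bound_of_continuousOn
            (f := fun q : ℝ × ℝ => -(c q).im)
            ((Complex.continuous_im.comp hccont).neg.continuousOn)
        have := intervalIntegral.hasDerivAt_integral_of_dominated_loc_of_deriv_le
          (F := fun v t => p (t, v)) (F' := fun v t => -(c (t, v)).im)
          (x₀ := a₀.2) (a := (0:ℝ)) (b := a₀.1) (bound := fun _ => C)
          (Metric.ball_mem_nhds _ one_pos)
          (Filter.Eventually.of_forall fun v =>
            ((hpcont.comp (continuous_id.prodMk continuous_const)).aestronglyMeasurable))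
          (hintp _ _ _)
          (((Complex.continuous_im.comp
            (hccont.comp (continuous_id.prodMk continuous_const))).neg).aestronglyMeasurable)
          (MeasureTheory.ae_of_all _ fun t ht x hx =>
            hC (t, x) ⟨Set.uIoc_subset_uIcc ht, Metric.ball_subset_closedBall hx⟩)
          intervalIntegrable_const
          (MeasureTheory.ae_of_all _ fun t ht x hx => by
            have hcurve : HasDerivAt (fun v : ℝ => ((t : ℝ), v)) ((0 : ℝ), (1 : ℝ)) x :=
              (hasDerivAt_const x t).prodMk (hasDerivAt_id x)
            have := (hp' (t, x)).comp_hasDerivAt x hcurve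
            have hval : (Complex.reCLM.comp (Stmt4Aux.Dm h (t, x))) ((0 : ℝ), (1 : ℝ))
                = -(c (t, x)).im := by
              simp only [ContinuousLinearMap.comp_apply, hDm2 (t, x), Complex.reCLM_apply]
              simp [Complex.mul_re]
            rw [hval] at this
            exact this)
        exact this.2
      have hint_eq : (∫ t in (0:ℝ)..a₀.1, -(c (t, a₀.2)).im)
          = y (0, a₀.2) - y (a₀.1, a₀.2) := by
        rw [intervalIntegral.integral_neg]
        have hftc : (∫ t in (0:ℝ)..a₀.1, (c (t, a₀.2)).im)
            = y (a₀.1, a₀.2) - y (0, a₀.2) := by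
          refine intervalIntegral.integral_eq_sub_of_hasDerivAt
            (f := fun t => y (t, a₀.2)) (f' := fun t => (c (t, a₀.2)).im) ?_ ?_
          · intro t _
            have hcurve : HasDerivAt (fun t : ℝ => (t, a₀.2)) ((1 : ℝ), (0 : ℝ)) t :=
              (hasDerivAt_id t).prodMk (hasDerivAt_const t a₀.2)
            have := (hy' (t, a₀.2)).comp_hasDerivAt t hcurve
            have hval : (Complex.imCLM.comp (Stmt4Aux.Dm h (t, a₀.2))) ((1 : ℝ), (0 : ℝ))
                = (c (t, a₀.2)).im := by
              simp only [ContinuousLinearMap.comp_apply, hDm1 (t, a₀.2), Complex.imCLM_apply]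
            rw [hval] at this
            exact this
          · exact (Complex.continuous_im.comp
              (hccont.comp (continuous_id.prodMk continuous_const))).intervalIntegrable _ _
        rw [hftc]; ring
      rw [hint_eq] at hA1
      have hA : HasFDerivAt (fun a : ℝ × ℝ => ∫ t in (0:ℝ)..a₀.1, p (t, a.2))
          ((y (0, a₀.2) - y (a₀.1, a₀.2)) • ContinuousLinearMap.snd ℝ ℝ ℝ) a₀ :=
        hA1.comp_hasFDerivAt a₀ hasFDerivAt_snd
      have hB : HasFDerivAt (fun a : ℝ × ℝ => ∫ t in a₀.1..a.1, p (t, a.2))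
          (p a₀ • ContinuousLinearMap.fst ℝ ℝ ℝ) a₀ :=
        Stmt4Aux.hasFDerivAt_param_integral hpcont a₀
      have hG : HasDerivAt (fun v => ∫ s in (0:ℝ)..v, y (0, s)) (y (0, a₀.2)) a₀.2 := by
        have hcy : Continuous fun s : ℝ => y (0, s) :=
          hycont.comp (continuous_const.prodMk continuous_id)
        exact intervalIntegral.integral_hasDerivAt_right (hcy.intervalIntegrable _ _)
          (hcy.stronglyMeasurableAtFilter _ _) hcy.continuousAt
      have hT3 : HasFDerivAt (fun a : ℝ × ℝ => ∫ s in (0:ℝ)..a.2, y (0, s))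
          (y (0, a₀.2) • ContinuousLinearMap.snd ℝ ℝ ℝ) a₀ :=
        hG.comp_hasFDerivAt a₀ hasFDerivAt_snd
      have hvy : HasFDerivAt (fun a : ℝ × ℝ => a.2 * y a)
          (a₀.2 • (Complex.imCLM.comp (Stmt4Aux.Dm h a₀)) + y a₀ • ContinuousLinearMap.snd ℝ ℝ ℝ)
          a₀ := hasFDerivAt_snd.mul (hy' a₀)
      have hsum := (((hA.add hB).sub hT3).add hvy)
      rw [hsplit]
      refine hsum.congr_fderiv ?_
      apply ContinuousLinearMap.ext
      intro x
      have him : (Complex.imCLM.comp (Stmt4Aux.Dm h a₀)) x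
          = x.1 * (c a₀).im + x.2 * (c a₀).re := by
        simp only [ContinuousLinearMap.comp_apply, Stmt4Aux.Dm_apply, Complex.imCLM_apply]
        simp [add_mul, Complex.mul_im]
        try ring
      simp only [hZcdef, ContinuousLinearMap.add_apply, ContinuousLinearMap.sub_apply,
        ContinuousLinearMap.smul_apply, ContinuousLinearMap.coe_fst',
        ContinuousLinearMap.coe_snd', him, smul_eq_mul]
      have hya : y a₀ = y (a₀.1, a₀.2) := rfl
      rw [hya]
      ring
    refine ⟨z, ?_, ?_⟩
    · -- smoothness
      have hyu_s : ContDiff ℝ (⊤ : ℕ∞) (fun a : ℝ × ℝ => (c a).im) :=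
        Complex.imCLM.contDiff.comp (hcdR.comp Stmt4Aux.cw.contDiff)
      have hyv_s : ContDiff ℝ (⊤ : ℕ∞) (fun a : ℝ × ℝ => (c a).re) :=
        Complex.reCLM.contDiff.comp (hcdR.comp Stmt4Aux.cw.contDiff)
      have hp_s : ContDiff ℝ (⊤ : ℕ∞) p := by
        rw [hpfun]; exact Complex.reCLM.contDiff.comp (hchR.comp Stmt4Aux.cw.contDiff)
      have hZc_s : ContDiff ℝ (⊤ : ℕ∞) Zc := by
        apply ContDiff.add
        · exact (hp_s.add (contDiff_snd.mul hyu_s)).smul contDiff_const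
        · exact (contDiff_snd.mul hyv_s).smul contDiff_const
      rw [contDiff_infty_iff_fderiv]
      refine ⟨fun a => (hz' a).differentiableAt, ?_⟩
      have : fderiv ℝ z = Zc := funext fun a => (hz' a).fderiv
      rw [this]
      exact hZc_s
    · intro a
      have h1 : pu z a = p a + a.2 * (c a).im := by
        simp only [pu, (hz' a).fderiv, hZcdef, ContinuousLinearMap.add_apply,
          ContinuousLinearMap.smul_apply, ContinuousLinearMap.coe_fst',
          ContinuousLinearMap.coe_snd', smul_eq_mul]
        ring
      have h2 : pv z a = a.2 * (c a).re := by
        simp only [pv, (hz' a).fderiv, hZcdef, ContinuousLinearMap.add_apply,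
          ContinuousLinearMap.smul_apply, ContinuousLinearMap.coe_fst',
          ContinuousLinearMap.coe_snd', smul_eq_mul]
        ring
      exact ⟨by rw [h1, hpu_y a], by rw [h2, hpv_y a]⟩
  · -- second part
    intro z hz a
    have hXc : ∀ b : ℝ × ℝ, HasFDerivAt Xc (ContinuousLinearMap.fst ℝ ℝ ℝ) b :=
      fun b => hasFDerivAt_fst
    have hQc : ∀ b : ℝ × ℝ, HasFDerivAt Qc (ContinuousLinearMap.snd ℝ ℝ ℝ) b :=
      fun b => hasFDerivAt_snd
    have hpuX : pu Xc a = 1 := by simp [pu, (hXc a).fderiv]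
    have hpvX : pv Xc a = 0 := by simp [pv, (hXc a).fderiv]
    have hpuQ : pu Qc a = 0 := by simp [pu, (hQc a).fderiv]
    have hpvQ : pv Qc a = 1 := by simp [pv, (hQc a).fderiv]
    have hQa : Qc a = a.2 := rfl
    refine ⟨⟨?_, ?_⟩, ?_⟩
    · rw [(hz a).1, hpuX, hQa]; ring
    · rw [(hz a).2, hpvX, hQa]; ring
    · simp only [Jac, hpuX, hpvX, hpuQ, hpvQ, hpu_p a, hpv_y a]
      ring
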